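/- arXiv:math/0411649 — 2 statements merged into one kernel-verified Lean document; each statement's English description precedes it below -/
import Mathlib

section
/- Let x = x_{i_1}⋯x_{i_r} with F = supp(x) ⊆ [n], and let a ∈ ℤ^n. Then (R_x)_a ≅ K if and only if F ⊇ G_a and for every u in the minimal monomial generating set G(I) there exists j ∉ F with ν_j(u) > a_j ≥ 0. -/
/- STATEMENT 1: With x = ∏_{i∈F} x_i in R = S/I (I a monomial ideal with minimal
monomial generating set G(I), encoded by the set `G` of exponent vectors) and
a ∈ ℤ^n: (R_x)_a ≅ K iff F ⊇ G_a and for every u ∈ G(I) there is j ∉ F with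
ν_j(u) > a_j ≥ 0.  Here G_a = {i : a_i < 0}, and the degree-a component (R_x)_a
of the ℤ^n-graded localization is the K-span of fractions σ/x^ℓ of multidegree a.
Minimality of G is expressed as: no generator divides another. -/

open MvPolynomial

set_option synthInstance.maxHeartbeats 1000000
set_option maxHeartbeats 1000000

noncomputable section

variable {n : ℕ} (K : Type) [Field K]

def Ga (a : Fin n → ℤ) : Finset (Fin n) := Finset.univ.filter (fun i => a i < 0)

def mon (u : Fin n → ℕ) : MvPolynomial (Fin n) K :=
  monomial (Finsupp.equivFunOnFinite.symm u) (1 : K)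

/-- The degree-`a` component of `R_x`, `x = ∏_{i∈F} x_i`. -/
def locComponent (I : Ideal (MvPolynomial (Fin n) K)) (F : Finset (Fin n)) (a : Fin n → ℤ) :
    Submodule K (Localization.Away
      (Ideal.Quotient.mk I (∏ i ∈ F, (X i : MvPolynomial (Fin n) K)))) :=
  Submodule.span K
    { y | ∃ (σ : Fin n → ℕ) (ℓ : ℕ),
        (∀ i, (σ i : ℤ) - ℓ * (if i ∈ F then 1 else 0) = a i) ∧
        y = algebraMap _ _ (Ideal.Quotient.mk I (mon K σ)) *
              (Localization.Away.invSelf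
                (Ideal.Quotient.mk I (∏ i ∈ F, (X i : MvPolynomial (Fin n) K)))) ^ ℓ }

lemma symm_apply (u : Fin n → ℕ) (j : Fin n) :
    (Finsupp.equivFunOnFinite.symm u) j = u j := rfl

lemma mon_mul (u v : Fin n → ℕ) : mon K u * mon K v = mon K (fun j => u j + v j) := by
  have h : Finsupp.equivFunOnFinite.symm u + Finsupp.equivFunOnFinite.symm v
      = Finsupp.equivFunOnFinite.symm (fun j => u j + v j) := by
    ext j; simp [symm_apply]
  simp only [mon, monomial_mul, one_mul, h]

lemma mon_pow (u : Fin n → ℕ) (m : ℕ) : mon K u ^ m = mon K (fun j => m * u j) := by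
  induction m with
  | zero =>
    have h : (Finsupp.equivFunOnFinite.symm (fun _ : Fin n => (0:ℕ)) : Fin n →₀ ℕ) = 0 := by
      ext j; simp [symm_apply]
    simp [mon, h]
  | succ m ih =>
    rw [pow_succ, ih, mon_mul]
    congr 1
    ext j
    ring

lemma prodX_eq (F : Finset (Fin n)) :
    (∏ i ∈ F, (X i : MvPolynomial (Fin n) K)) = mon K (fun j => if j ∈ F then 1 else 0) := by
  classical
  induction F using Finset.induction_on with
  | empty =>
    have h : (Finsupp.equivFunOnFinite.symm (fun _ : Fin n => (0:ℕ)) : Fin n →₀ ℕ) = 0 := by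
      ext j; simp [symm_apply]
    simp [mon, h]
  | @insert a F ha ih =>
    rw [Finset.prod_insert ha, ih]
    have hX : (X a : MvPolynomial (Fin n) K) = mon K (fun j => if j = a then 1 else 0) := by
      have h : (Finsupp.equivFunOnFinite.symm (fun j : Fin n => if j = a then 1 else 0) : Fin n →₀ ℕ)
          = Finsupp.single a 1 := by
        ext j; simp [symm_apply, Finsupp.single_apply, eq_comm]
      rw [mon, h]
      rfl
    rw [hX, mon_mul]
    congr 1
    ext j
    by_cases hj : j = a <;> by_cases hjF : j ∈ F <;> simp [hj, hjF, ha]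

lemma mon_mem_iff (G : Finset (Fin n → ℕ)) (σ : Fin n → ℕ) :
    mon K σ ∈ Ideal.span ((fun u => mon K u) '' G) ↔ ∃ u ∈ G, ∀ j, u j ≤ σ j := by
  classical
  have himg : ((fun u => mon K u) '' G : Set (MvPolynomial (Fin n) K)) =
      (fun s => monomial s (1 : K)) '' (Finsupp.equivFunOnFinite.symm '' (G : Set (Fin n → ℕ))) := by
    rw [Set.image_image]; rfl
  rw [himg, mem_ideal_span_monomial_image]
  have hsupp : (mon K σ).support = {Finsupp.equivFunOnFinite.symm σ} := by
    rw [mon, support_monomial, if_neg (one_ne_zero : (1:K) ≠ 0)]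
  rw [hsupp]
  constructor
  · intro h
    obtain ⟨si, hsi, hle⟩ := h _ (Finset.mem_singleton_self _)
    obtain ⟨u, hu, rfl⟩ := hsi
    exact ⟨u, hu, fun j => by simpa [symm_apply] using hle j⟩
  · rintro ⟨u, hu, hle⟩ xi hxi
    rw [Finset.mem_singleton] at hxi
    subst hxi
    exact ⟨_, ⟨u, hu, rfl⟩, fun j => by simpa [symm_apply] using hle j⟩

lemma alg_mul_invSelf {R : Type*} [CommRing R] (x : R) :
    algebraMap R (Localization.Away x) x * Localization.Away.invSelf x = 1 := by
  rw [← Localization.mk_one_eq_algebraMap, Localization.Away.invSelf, Localization.mk_mul,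
    mul_one, one_mul]
  exact Localization.mk_self ⟨x, Submonoid.mem_powers x⟩

lemma frac_shift (I : Ideal (MvPolynomial (Fin n) K)) (F : Finset (Fin n))
    (σ : Fin n → ℕ) (ℓ m : ℕ) :
    algebraMap _ (Localization.Away (Ideal.Quotient.mk I (∏ i ∈ F, (X i : MvPolynomial (Fin n) K))))
        (Ideal.Quotient.mk I (mon K σ)) *
      (Localization.Away.invSelf (Ideal.Quotient.mk I (∏ i ∈ F, (X i : MvPolynomial (Fin n) K)))) ^ ℓ
    = algebraMap _ _ (Ideal.Quotient.mk I (mon K (fun j => σ j + m * (if j ∈ F then 1 else 0)))) *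
      (Localization.Away.invSelf (Ideal.Quotient.mk I (∏ i ∈ F, (X i : MvPolynomial (Fin n) K)))) ^ (ℓ + m) := by
  set x := Ideal.Quotient.mk I (∏ i ∈ F, (X i : MvPolynomial (Fin n) K)) with hx
  have h1 : mon K (fun j => σ j + m * (if j ∈ F then 1 else 0))
      = mon K σ * (∏ i ∈ F, (X i : MvPolynomial (Fin n) K)) ^ m := by
    rw [prodX_eq, mon_pow, mon_mul]
  have key : (algebraMap _ (Localization.Away x) x * Localization.Away.invSelf x) ^ m = 1 := by
    rw [alg_mul_invSelf, one_pow]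
  rw [h1, map_mul, map_pow, map_mul, map_pow, pow_add]
  calc algebraMap _ (Localization.Away x) (Ideal.Quotient.mk I (mon K σ)) *
        Localization.Away.invSelf x ^ ℓ
      = algebraMap _ (Localization.Away x) (Ideal.Quotient.mk I (mon K σ)) *
        Localization.Away.invSelf x ^ ℓ *
        ((algebraMap _ (Localization.Away x) x * Localization.Away.invSelf x) ^ m) := by
        rw [key, mul_one]
    _ = _ := by rw [mul_pow]; ring

lemma frac_eq_zero_iff (I : Ideal (MvPolynomial (Fin n) K)) (F : Finset (Fin n))
    (σ : Fin n → ℕ) (ℓ : ℕ) :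
    (algebraMap _ (Localization.Away (Ideal.Quotient.mk I (∏ i ∈ F, (X i : MvPolynomial (Fin n) K))))
        (Ideal.Quotient.mk I (mon K σ)) *
      (Localization.Away.invSelf (Ideal.Quotient.mk I (∏ i ∈ F, (X i : MvPolynomial (Fin n) K)))) ^ ℓ
      = 0)
    ↔ ∃ N : ℕ, mon K (fun j => σ j + N * (if j ∈ F then 1 else 0)) ∈ I := by
  set x := Ideal.Quotient.mk I (∏ i ∈ F, (X i : MvPolynomial (Fin n) K)) with hx
  constructor
  · intro h
    have h0 : algebraMap _ (Localization.Away x) (Ideal.Quotient.mk I (mon K σ)) = 0 := by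
      have key : (algebraMap _ (Localization.Away x) x * Localization.Away.invSelf x) ^ ℓ = 1 := by
        rw [alg_mul_invSelf, one_pow]
      calc algebraMap _ (Localization.Away x) (Ideal.Quotient.mk I (mon K σ))
          = algebraMap _ (Localization.Away x) (Ideal.Quotient.mk I (mon K σ)) *
            Localization.Away.invSelf x ^ ℓ * (algebraMap _ (Localization.Away x) x) ^ ℓ := by
            rw [mul_assoc, ← mul_pow, mul_comm (Localization.Away.invSelf x), key, mul_one]
        _ = 0 := by
            rw [h]
            exact zero_mul (M₀ := Localization.Away x) _
    obtain ⟨⟨m, N, rfl⟩, hm⟩ :=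
      (IsLocalization.map_eq_zero_iff (Submonoid.powers x) (Localization.Away x) _).mp h0
    refine ⟨N, ?_⟩
    have : Ideal.Quotient.mk I ((∏ i ∈ F, (X i : MvPolynomial (Fin n) K)) ^ N * mon K σ) = 0 := by
      rw [map_mul, map_pow]; exact hm
    rw [Ideal.Quotient.eq_zero_iff_mem] at this
    have heq : (∏ i ∈ F, (X i : MvPolynomial (Fin n) K)) ^ N * mon K σ
        = mon K (fun j => σ j + N * (if j ∈ F then 1 else 0)) := by
      rw [prodX_eq, mon_pow, mon_mul]
      congr 1
      ext j
      ring
    rwa [heq] at this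
  · rintro ⟨N, hN⟩
    have := frac_shift K I F σ ℓ N
    rw [this, Ideal.Quotient.eq_zero_iff_mem.mpr hN, map_zero]
    exact zero_mul (M₀ := Localization.Away x) _

lemma no_equiv_of_bot {M : Type*} [AddCommMonoid M] [Module K M] :
    ¬ Nonempty ((⊥ : Submodule K M) ≃ₗ[K] K) := by
  rintro ⟨e⟩
  have hall : ∀ y : (⊥ : Submodule K M), y = 0 := fun y =>
    Subtype.ext ((Submodule.mem_bot K).mp y.2)
  have : (0 : K) = 1 := e.symm.injective ((hall (e.symm 0)).trans (hall (e.symm 1)).symm)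
  exact zero_ne_one this

theorem locComponent_iso_K_iff (I : Ideal (MvPolynomial (Fin n) K))
    (G : Finset (Fin n → ℕ))
    (hI : I = Ideal.span ((fun u => mon K u) '' G))
    (hmin : ∀ u ∈ G, ∀ v ∈ G, (∀ j, u j ≤ v j) → u = v)
    (hne : ∀ u ∈ G, u ≠ 0)
    (F : Finset (Fin n)) (a : Fin n → ℤ) :
    Nonempty (locComponent K I F a ≃ₗ[K] K) ↔
      (Ga a ⊆ F ∧ ∀ u ∈ G, ∃ j, j ∉ F ∧ 0 ≤ a j ∧ a j < (u j : ℤ)) := by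
  classical
  by_cases hGa : Ga a ⊆ F
  · -- main case
    have hpos : ∀ j, j ∉ F → 0 ≤ a j := by
      intro j hj
      by_contra h
      exact hj (hGa (by simp [Ga]; omega))
    set ℓ₀ : ℕ := Finset.univ.sup fun i => (a i).natAbs with hℓ₀
    have hℓ₀le : ∀ i, (a i).natAbs ≤ ℓ₀ := fun i =>
      Finset.le_sup (f := fun i => (a i).natAbs) (Finset.mem_univ i)
    set σ₀ : Fin n → ℕ := fun i => (a i + ℓ₀ * (if i ∈ F then 1 else 0)).toNat with hσ₀
    have hdeg₀ : ∀ i, (σ₀ i : ℤ) - (ℓ₀:ℤ) * (if i ∈ F then 1 else 0) = a i := by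
      intro i
      have := hℓ₀le i
      by_cases hi : i ∈ F
      · simp only [hσ₀, if_pos hi, mul_one]
        omega
      · have hp := hpos i hi
        simp only [hσ₀, if_neg hi, mul_zero]
        omega
    set y₀ := algebraMap _ (Localization.Away (Ideal.Quotient.mk I (∏ i ∈ F, (X i : MvPolynomial (Fin n) K))))
        (Ideal.Quotient.mk I (mon K σ₀)) *
        (Localization.Away.invSelf (Ideal.Quotient.mk I (∏ i ∈ F, (X i : MvPolynomial (Fin n) K)))) ^ ℓ₀
      with hy₀
    have hset : { y | ∃ (σ : Fin n → ℕ) (ℓ : ℕ),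
        (∀ i, (σ i : ℤ) - ℓ * (if i ∈ F then 1 else 0) = a i) ∧
        y = algebraMap _ _ (Ideal.Quotient.mk I (mon K σ)) *
              (Localization.Away.invSelf
                (Ideal.Quotient.mk I (∏ i ∈ F, (X i : MvPolynomial (Fin n) K)))) ^ ℓ } = {y₀} := by
      ext y
      simp only [Set.mem_setOf_eq, Set.mem_singleton_iff]
      constructor
      · rintro ⟨σ, ℓ, hdeg, rfl⟩
        have e1 := frac_shift K I F σ ℓ ℓ₀
        have e2 := frac_shift K I F σ₀ ℓ₀ ℓ
        have hfun : (fun j => σ j + ℓ₀ * (if j ∈ F then 1 else 0))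
            = (fun j => σ₀ j + ℓ * (if j ∈ F then 1 else 0)) := by
          funext i
          have h1 := hdeg i
          have h2 := hdeg₀ i
          by_cases hi : i ∈ F <;> simp only [hi, if_true, if_false] at h1 h2 ⊢ <;> omega
        rw [e1, hfun, hy₀, e2, Nat.add_comm ℓ₀ ℓ]
      · rintro rfl
        exact ⟨σ₀, ℓ₀, hdeg₀, rfl⟩
    have hcomp : locComponent K I F a = Submodule.span K {y₀} := by
      rw [locComponent, hset]
    have hiff : Nonempty (locComponent K I F a ≃ₗ[K] K) ↔ y₀ ≠ 0 := by
      constructor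
      · rintro ⟨e⟩ h
        rw [hcomp, h, Submodule.span_zero_singleton] at e
        exact no_equiv_of_bot K ⟨e⟩
      · intro h
        rw [hcomp]
        haveI : NoZeroSMulDivisors K (Localization.Away
            (Ideal.Quotient.mk I (∏ i ∈ F, (X i : MvPolynomial (Fin n) K)))) := by
          constructor
          intro c y hcy
          by_cases hc : c = 0
          · exact Or.inl hc
          · right
            rw [← one_smul K y, ← inv_mul_cancel₀ hc, mul_smul, hcy]
            letI inst : Module K (Localization.Away
              (Ideal.Quotient.mk I (∏ i ∈ F, (X i : MvPolynomial (Fin n) K)))) := inferInstance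
            exact inst.toDistribMulAction.smul_zero c⁻¹
        exact ⟨(LinearEquiv.toSpanNonzeroSingleton K _ y₀ h).symm⟩
    rw [hiff]
    constructor
    · intro h
      refine ⟨hGa, ?_⟩
      intro u hu
      by_contra hcon
      push_neg at hcon
      apply h
      rw [hy₀]
      apply (frac_eq_zero_iff K I F σ₀ ℓ₀).mpr
      refine ⟨Finset.univ.sup u, ?_⟩
      rw [hI]
      apply (mon_mem_iff K G _).mpr
      refine ⟨u, hu, fun j => ?_⟩
      have hsup : u j ≤ Finset.univ.sup u := Finset.le_sup (Finset.mem_univ j)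
      by_cases hj : j ∈ F
      · simp only [hσ₀, hj, if_true]
        omega
      · have h1 := hcon j hj (hpos j hj)
        simp only [hσ₀, hj, if_false]
        have h2 := hpos j hj
        omega
    · rintro ⟨-, h2⟩ h
      rw [hy₀] at h
      obtain ⟨N, hN⟩ := (frac_eq_zero_iff K I F σ₀ ℓ₀).mp h
      rw [hI] at hN
      obtain ⟨u, hu, hle⟩ := (mon_mem_iff K G _).mp hN
      obtain ⟨j, hjF, hj0, hjlt⟩ := h2 u hu
      have := hle j
      simp only [hσ₀, hjF, if_false] at this
      omega
  · -- Ga ⊄ F : both sides false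
    simp only [hGa, false_and, iff_false]
    rintro ⟨e⟩
    obtain ⟨i, hiGa, hiF⟩ := Finset.not_subset.mp hGa
    have hia : a i < 0 := by simpa [Ga] using hiGa
    have hbot : locComponent K I F a = ⊥ := by
      rw [locComponent]
      apply Submodule.span_eq_bot.mpr
      rintro y ⟨σ, ℓ, hdeg, rfl⟩
      exfalso
      have := hdeg i
      simp only [hiF, if_false] at this
      omega
    rw [hbot] at e
    exact no_equiv_of_bot K ⟨e⟩


end
end

section
/- For any monomial ideal I ⊂ S = K[X_1,…,X_n] and R = S/I, the top nonvanishing degree of local cohomology satisfies a_i(R) ≤ Σ_{j=1}^n ρ_j − n for all i, where ρ_j = max{ν_j(u) : u ∈ G(I)}. -/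
/- STATEMENT 9: for any monomial ideal I and R = S/I,
a_i(R) ≤ Σ_j ρ_j − n for all i, i.e. the degree-a component of H^i_m(R)
(computed by the ℤⁿ-graded Čech complex, `lcRank`) vanishes whenever the total
degree Σ_j a_j exceeds Σ_j ρ_j − n, where ρ_j = max{ν_j(u) : u ∈ G(I)}. -/

open Finset
open scoped Classical

noncomputable section

variable (K : Type) [Field K] {n : ℕ}

/-- the non-vanishing condition for the component of the Čech complex indexed by `F`. -/
def valid (G : Finset (Fin n → ℕ)) (a : Fin n → ℤ) (F : Finset (Fin n)) : Prop :=
  Ga a ⊆ F ∧ ∀ u ∈ G, ∃ j, j ∉ F ∧ 0 ≤ a j ∧ a j < (u j : ℤ)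

def deltaA (G : Finset (Fin n → ℕ)) (a : Fin n → ℤ) : Set (Finset (Fin n)) :=
  { s | ∃ F : Finset (Fin n), valid G a F ∧ s = F \ Ga a }

/-- the group of `i`-chains of the augmented oriented chain complex of `Δ`, with
coefficients in `K`: the free `K`-module on the faces of dimension `i` (cardinality
`i+1`); for `i = -1` this is spanned by `∅` if `∅ ∈ Δ`. -/
abbrev chainGroup (Δ : Set (Finset (Fin n))) (i : ℤ) : Type :=
  {F : Finset (Fin n) // F ∈ Δ ∧ (F.card : ℤ) = i + 1} →₀ K

/-- the boundary map `∂ F = Σ_j (-1)^j F_j` of the augmented oriented chain complex. -/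
def bdry (Δ : Set (Finset (Fin n))) (i : ℤ) :
    chainGroup K Δ i →ₗ[K] chainGroup K Δ (i - 1) :=
  Finsupp.lsum K fun F =>
    LinearMap.toSpanSingleton K _
      (∑ j : Fin (F.1.sort (· ≤ ·)).length,
        ((-1 : K) ^ (j : ℕ)) •
          (if h : (F.1.erase ((F.1.sort (· ≤ ·)).get j)) ∈ Δ ∧
              (((F.1.erase ((F.1.sort (· ≤ ·)).get j)).card : ℤ) = (i - 1) + 1)
           then Finsupp.single
             (⟨F.1.erase ((F.1.sort (· ≤ ·)).get j), h⟩ :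
               {F' : Finset (Fin n) // F' ∈ Δ ∧ (F'.card : ℤ) = (i - 1) + 1}) (1 : K)
           else 0))

/-- `dim_K H̃_i(Δ; K)`, the dimension of the `i`-th reduced simplicial homology. -/
def redHomRank (Δ : Set (Finset (Fin n))) (i : ℤ) : ℕ :=
  Module.finrank K (LinearMap.ker (bdry K Δ i)) -
    Module.finrank K (LinearMap.range (bdry K Δ (i + 1)))

/-- basis of the degree-`a` piece of the `t`-th term of the Čech complex of `R = S/I`
on `x_1,…,x_n` (Lemma 1 of the paper): subsets `F` with `|F| = t`, `F ⊇ G_a`,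
satisfying the non-vanishing condition. -/
abbrev cechC (G : Finset (Fin n → ℕ)) (a : Fin n → ℤ) (t : ℕ) : Type :=
  {F : Finset (Fin n) // F.card = t ∧ valid G a F} →₀ K

/-- the differential of the degree-`a` piece of the Čech complex. -/
def cechD (G : Finset (Fin n → ℕ)) (a : Fin n → ℤ) (t : ℕ) :
    cechC K G a t →ₗ[K] cechC K G a (t + 1) :=
  Finsupp.lsum K fun F =>
    LinearMap.toSpanSingleton K _
      (∑ j ∈ Finset.univ.filter (fun j => j ∉ F.1),
        ((-1 : K) ^ ((F.1.filter (fun k => k < j)).card)) •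
          (if h : (insert j F.1).card = t + 1 ∧ valid G a (insert j F.1)
           then Finsupp.single (⟨insert j F.1, h⟩ :
               {F' : Finset (Fin n) // F'.card = t + 1 ∧ valid G a F'}) (1 : K)
           else 0))

/-- `dim_K H^i_m(R)_a = dim_K H^i((C^•)_a)`, the dimension of the degree-`a`
component of the `i`-th local cohomology of `R = S/I`, computed via the
ℤⁿ-graded Čech complex on `x_1,…,x_n`. -/
def lcRank (G : Finset (Fin n → ℕ)) (a : Fin n → ℤ) (i : ℕ) : ℕ :=
  Module.finrank K (LinearMap.ker (cechD K G a i)) -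
    (match i with
     | 0 => 0
     | Nat.succ i => Module.finrank K (LinearMap.range (cechD K G a i)))


/-- `ρ_j = max{ν_j(u) : u ∈ G(I)}` -/
def rho (G : Finset (Fin n → ℕ)) (j : Fin n) : ℕ := G.sup (fun u => u j)


section Contractible

variable (G : Finset (Fin n → ℕ)) (a : Fin n → ℤ) (j₀ : Fin n)

lemma valid_erase_j0 (hj0a : 0 ≤ a j₀) {F : Finset (Fin n)}
    (h : valid G a F) : valid G a (F.erase j₀) := by
  constructor
  · intro x hx
    refine Finset.mem_erase.2 ⟨?_, h.1 hx⟩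
    rintro rfl
    simp only [Ga, Finset.mem_filter, Finset.mem_univ, true_and] at hx
    omega
  · intro u hu
    obtain ⟨j, hjF, hj⟩ := h.2 u hu
    exact ⟨j, fun hj' => hjF (Finset.mem_of_mem_erase hj'), hj⟩

lemma valid_insert_j0 (hj0u : ∀ u ∈ G, (u j₀ : ℤ) ≤ a j₀) {F : Finset (Fin n)}
    (h : valid G a F) : valid G a (insert j₀ F) := by
  refine ⟨h.1.trans (Finset.subset_insert _ _), fun u hu => ?_⟩
  obtain ⟨j, hjF, hj1, hj2⟩ := h.2 u hu
  refine ⟨j, ?_, hj1, hj2⟩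
  have hne : j ≠ j₀ := by
    rintro rfl
    have := hj0u u hu
    omega
  simp [Finset.mem_insert, hne, hjF]

/-- the contracting homotopy "erase `j₀`". -/
def hmt (hj0a : 0 ≤ a j₀) (t : ℕ) :
    cechC K G a (t + 1) →ₗ[K] cechC K G a t :=
  Finsupp.lsum K fun F =>
    LinearMap.toSpanSingleton K _
      (if h : j₀ ∈ F.1 then
        ((-1 : K) ^ ((F.1.filter (fun k => k < j₀)).card)) •
          Finsupp.single (⟨F.1.erase j₀,
            by simp [Finset.card_erase_of_mem h, F.2.1],
            valid_erase_j0 G a j₀ hj0a F.2.2⟩ :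
            {F' : Finset (Fin n) // F'.card = t ∧ valid G a F'}) (1 : K)
      else 0)

lemma cechD_single (t : ℕ) (s : Finset (Fin n)) (hs : s.card = t ∧ valid G a s) :
    cechD K G a t (Finsupp.single ⟨s, hs⟩ 1) =
      ∑ j ∈ Finset.univ.filter (fun j => j ∉ s),
        ((-1 : K) ^ ((s.filter (fun k => k < j)).card)) •
          (if h : (insert j s).card = t + 1 ∧ valid G a (insert j s)
           then Finsupp.single (⟨insert j s, h⟩ :
               {F' : Finset (Fin n) // F'.card = t + 1 ∧ valid G a F'}) (1 : K)
           else 0) := by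
  simp only [cechD, Finsupp.lsum_single, LinearMap.toSpanSingleton_apply, one_smul]

lemma hmt_single_notMem (hj0a : 0 ≤ a j₀) (t : ℕ) (s : Finset (Fin n))
    (hs : s.card = t + 1 ∧ valid G a s) (h : j₀ ∉ s) :
    hmt K G a j₀ hj0a t (Finsupp.single ⟨s, hs⟩ 1) = 0 := by
  simp only [hmt, Finsupp.lsum_single, LinearMap.toSpanSingleton_apply, one_smul]
  rw [dif_neg h]

lemma hmt_single_mem (hj0a : 0 ≤ a j₀) (t : ℕ) (s : Finset (Fin n))
    (hs : s.card = t + 1 ∧ valid G a s) (h : j₀ ∈ s)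
    (hc : (s.erase j₀).card = t) (hv : valid G a (s.erase j₀)) :
    hmt K G a j₀ hj0a t (Finsupp.single ⟨s, hs⟩ 1) =
      ((-1 : K) ^ ((s.filter (fun k => k < j₀)).card)) •
        Finsupp.single (⟨s.erase j₀, hc, hv⟩ :
          {F' : Finset (Fin n) // F'.card = t ∧ valid G a F'}) (1 : K) := by
  simp only [hmt, Finsupp.lsum_single, LinearMap.toSpanSingleton_apply, one_smul]
  rw [dif_pos h]

lemma keyA (hj0a : 0 ≤ a j₀) (hj0u : ∀ u ∈ G, (u j₀ : ℤ) ≤ a j₀) (t : ℕ)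
    (s : Finset (Fin n)) (hs : s.card = t ∧ valid G a s) (hF : j₀ ∉ s) :
    hmt K G a j₀ hj0a t (cechD K G a t (Finsupp.single ⟨s, hs⟩ 1)) =
      Finsupp.single ⟨s, hs⟩ 1 := by
  rw [cechD_single, map_sum]
  rw [Finset.sum_eq_single_of_mem j₀ (by simp [hF])]
  · rw [map_smul]
    have hcond : (insert j₀ s).card = t + 1 ∧ valid G a (insert j₀ s) :=
      ⟨by rw [Finset.card_insert_of_notMem hF, hs.1],
       valid_insert_j0 G a j₀ hj0u hs.2⟩
    rw [dif_pos hcond]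
    have hE : (insert j₀ s).erase j₀ = s := Finset.erase_insert hF
    have hc' : ((insert j₀ s).erase j₀).card = t := by rw [hE, hs.1]
    have hv' : valid G a ((insert j₀ s).erase j₀) := by rw [hE]; exact hs.2
    rw [hmt_single_mem K G a j₀ hj0a t (insert j₀ s) hcond (Finset.mem_insert_self _ _) hc' hv']
    have hsub : (⟨(insert j₀ s).erase j₀, hc', hv'⟩ :
        {F' : Finset (Fin n) // F'.card = t ∧ valid G a F'}) = ⟨s, hs⟩ := Subtype.ext hE
    rw [hsub]
    have hfilt : (insert j₀ s).filter (fun k => k < j₀) = s.filter (fun k => k < j₀) := by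
      rw [Finset.filter_insert, if_neg (lt_irrefl j₀)]
    rw [hfilt, smul_smul, ← pow_add, ← two_mul, pow_mul]
    norm_num
  · intro j hj hne
    rw [map_smul]
    by_cases hcond : (insert j s).card = t + 1 ∧ valid G a (insert j s)
    · rw [dif_pos hcond]
      have hj0' : j₀ ∉ insert j s := by
        simp only [Finset.mem_insert]
        rintro (rfl | h)
        · exact hne rfl
        · exact hF h
      rw [hmt_single_notMem K G a j₀ hj0a t (insert j s) hcond hj0', smul_zero]
    · rw [dif_neg hcond, map_zero, smul_zero]

lemma keyB (hj0a : 0 ≤ a j₀) (hj0u : ∀ u ∈ G, (u j₀ : ℤ) ≤ a j₀) (t : ℕ)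
    (s : Finset (Fin n)) (hs : s.card = t + 1 ∧ valid G a s) (hF : j₀ ∈ s) :
    cechD K G a t (hmt K G a j₀ hj0a t (Finsupp.single ⟨s, hs⟩ 1)) +
      hmt K G a j₀ hj0a (t + 1) (cechD K G a (t + 1) (Finsupp.single ⟨s, hs⟩ 1)) =
      Finsupp.single ⟨s, hs⟩ 1 := by
  have hcE : (s.erase j₀).card = t := by simp [Finset.card_erase_of_mem hF, hs.1]
  have hvE : valid G a (s.erase j₀) := valid_erase_j0 G a j₀ hj0a hs.2
  rw [hmt_single_mem K G a j₀ hj0a t s hs hF hcE hvE, map_smul,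
    cechD_single K G a t (s.erase j₀) ⟨hcE, hvE⟩,
    cechD_single K G a (t + 1) s hs, map_sum]
  have hsplit : Finset.univ.filter (fun j => j ∉ s.erase j₀) =
      insert j₀ (Finset.univ.filter (fun j => j ∉ s)) := by
    ext k
    simp only [Finset.mem_filter, Finset.mem_univ, true_and, Finset.mem_insert,
      Finset.mem_erase]
    by_cases hk : k = j₀ <;> simp [hk, hF]
  have hj0S : j₀ ∉ Finset.univ.filter (fun j => j ∉ s) := by simp [hF]
  rw [hsplit, Finset.sum_insert hj0S, smul_add, Finset.smul_sum]
  have hA : ((-1 : K) ^ ((s.filter (fun k => k < j₀)).card)) •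
      (((-1 : K) ^ (((s.erase j₀).filter (fun k => k < j₀)).card)) •
        (if h : (insert j₀ (s.erase j₀)).card = t + 1 ∧ valid G a (insert j₀ (s.erase j₀))
         then Finsupp.single (⟨insert j₀ (s.erase j₀), h⟩ :
             {F' : Finset (Fin n) // F'.card = t + 1 ∧ valid G a F'}) (1 : K)
         else 0)) = Finsupp.single ⟨s, hs⟩ 1 := by
    have h1 : insert j₀ (s.erase j₀) = s := Finset.insert_erase hF
    have hcond : (insert j₀ (s.erase j₀)).card = t + 1 ∧ valid G a (insert j₀ (s.erase j₀)) := by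
      rw [h1]; exact hs
    rw [dif_pos hcond]
    have hsub : (⟨insert j₀ (s.erase j₀), hcond⟩ :
        {F' : Finset (Fin n) // F'.card = t + 1 ∧ valid G a F'}) = ⟨s, hs⟩ := Subtype.ext h1
    rw [hsub]
    have hfilt : (s.erase j₀).filter (fun k => k < j₀) = s.filter (fun k => k < j₀) := by
      ext k
      simp only [Finset.mem_filter, Finset.mem_erase]
      constructor
      · rintro ⟨⟨_, hks⟩, hk⟩; exact ⟨hks, hk⟩
      · rintro ⟨hks, hk⟩; exact ⟨⟨ne_of_lt hk, hks⟩, hk⟩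
    rw [hfilt, smul_smul, ← pow_add, ← two_mul, pow_mul]
    norm_num
  rw [hA, add_assoc, ← Finset.sum_add_distrib]
  have hterm : ∀ j ∈ Finset.univ.filter (fun j => j ∉ s),
      ((-1 : K) ^ ((s.filter (fun k => k < j₀)).card)) •
        (((-1 : K) ^ (((s.erase j₀).filter (fun k => k < j)).card)) •
          (if h : (insert j (s.erase j₀)).card = t + 1 ∧ valid G a (insert j (s.erase j₀))
           then Finsupp.single (⟨insert j (s.erase j₀), h⟩ :
               {F' : Finset (Fin n) // F'.card = t + 1 ∧ valid G a F'}) (1 : K)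
           else 0)) +
      hmt K G a j₀ hj0a (t + 1)
        (((-1 : K) ^ ((s.filter (fun k => k < j)).card)) •
          (if h : (insert j s).card = t + 1 + 1 ∧ valid G a (insert j s)
           then Finsupp.single (⟨insert j s, h⟩ :
               {F' : Finset (Fin n) // F'.card = t + 1 + 1 ∧ valid G a F'}) (1 : K)
           else 0)) = 0 := by
    intro j hj
    have hjs : j ∉ s := by simpa using hj
    have hjne : j ≠ j₀ := fun h => hjs (h ▸ hF)
    have hins : (insert j s).erase j₀ = insert j (s.erase j₀) :=
      Finset.erase_insert_of_ne hjne
    rw [map_smul]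
    by_cases hv : valid G a (insert j s)
    · have hcond1 : (insert j s).card = t + 1 + 1 ∧ valid G a (insert j s) :=
        ⟨by rw [Finset.card_insert_of_notMem hjs, hs.1], hv⟩
      have hvE' : valid G a (insert j (s.erase j₀)) := by
        rw [← hins]; exact valid_erase_j0 G a j₀ hj0a hv
      have hcond2 : (insert j (s.erase j₀)).card = t + 1 ∧
          valid G a (insert j (s.erase j₀)) :=
        ⟨by rw [Finset.card_insert_of_notMem
            (fun h => hjs (Finset.mem_of_mem_erase h)), hcE], hvE'⟩
      rw [dif_pos hcond1, dif_pos hcond2]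
      have hj0i : j₀ ∈ insert j s := Finset.mem_insert_of_mem hF
      have hc' : ((insert j s).erase j₀).card = t + 1 := by rw [hins]; exact hcond2.1
      have hv' : valid G a ((insert j s).erase j₀) := by rw [hins]; exact hvE'
      rw [hmt_single_mem K G a j₀ hj0a (t + 1) (insert j s) hcond1 hj0i hc' hv']
      have hsub : (⟨(insert j s).erase j₀, hc', hv'⟩ :
          {F' : Finset (Fin n) // F'.card = t + 1 ∧ valid G a F'}) =
          ⟨insert j (s.erase j₀), hcond2⟩ := Subtype.ext hins
      rw [hsub, smul_smul, smul_smul, ← add_smul]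
      convert zero_smul K _
      rcases hjne.lt_or_gt with hlt | hlt
      · -- j < j₀
        have hγ : (s.erase j₀).filter (fun k => k < j) = s.filter (fun k => k < j) := by
          ext k
          simp only [Finset.mem_filter, Finset.mem_erase]
          constructor
          · rintro ⟨⟨_, hks⟩, hk⟩; exact ⟨hks, hk⟩
          · rintro ⟨hks, hk⟩; exact ⟨⟨ne_of_lt (hk.trans hlt), hks⟩, hk⟩
        have hδ : (insert j s).filter (fun k => k < j₀) =
            insert j (s.filter (fun k => k < j₀)) := by
          rw [Finset.filter_insert, if_pos hlt]
        have hδc : ((insert j s).filter (fun k => k < j₀)).card =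
            (s.filter (fun k => k < j₀)).card + 1 := by
          rw [hδ, Finset.card_insert_of_notMem
            (fun h => hjs (Finset.mem_filter.1 h).1)]
        rw [hγ, hδc, pow_succ]
        ring
      · -- j₀ < j
        have hδ : (insert j s).filter (fun k => k < j₀) = s.filter (fun k => k < j₀) := by
          rw [Finset.filter_insert, if_neg (not_lt.2 hlt.le)]
        have hm : j₀ ∈ s.filter (fun k => k < j) := Finset.mem_filter.2 ⟨hF, hlt⟩
        have hpos : 0 < (s.filter (fun k => k < j)).card :=
          Finset.card_pos.2 ⟨j₀, hm⟩
        have hcj : (s.filter (fun k => k < j)).card =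
            ((s.erase j₀).filter (fun k => k < j)).card + 1 := by
          rw [Finset.filter_erase, Finset.card_erase_of_mem hm]
          omega
        rw [hδ, hcj, pow_succ]
        ring
    · have hcond1 : ¬ ((insert j s).card = t + 1 + 1 ∧ valid G a (insert j s)) :=
        fun h => hv h.2
      have hcond2 : ¬ ((insert j (s.erase j₀)).card = t + 1 ∧
          valid G a (insert j (s.erase j₀))) := by
        rintro ⟨-, hval⟩
        apply hv
        have h2 := valid_insert_j0 G a j₀ hj0u hval
        rwa [Finset.insert_comm, Finset.insert_erase hF] at h2
      rw [dif_neg hcond1, dif_neg hcond2]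
      simp
  rw [Finset.sum_eq_zero hterm, add_zero]

lemma homotopy_id0 (hj0a : 0 ≤ a j₀) (hj0u : ∀ u ∈ G, (u j₀ : ℤ) ≤ a j₀) :
    (hmt K G a j₀ hj0a 0).comp (cechD K G a 0) = LinearMap.id := by
  apply Finsupp.lhom_ext'
  intro F
  apply LinearMap.ext_ring
  obtain ⟨s, hs⟩ := F
  have h0 : s = ∅ := Finset.card_eq_zero.1 hs.1
  have hF : j₀ ∉ s := by simp [h0]
  simpa using keyA K G a j₀ hj0a hj0u 0 s hs hF

lemma homotopy_id (hj0a : 0 ≤ a j₀) (hj0u : ∀ u ∈ G, (u j₀ : ℤ) ≤ a j₀) (t : ℕ) :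
    (cechD K G a t).comp (hmt K G a j₀ hj0a t) +
      (hmt K G a j₀ hj0a (t + 1)).comp (cechD K G a (t + 1)) = LinearMap.id := by
  apply Finsupp.lhom_ext'
  intro F
  apply LinearMap.ext_ring
  obtain ⟨s, hs⟩ := F
  simp only [LinearMap.add_apply, LinearMap.coe_comp, Function.comp_apply,
    Finsupp.lsingle_apply, LinearMap.id_apply]
  by_cases hF : j₀ ∈ s
  · exact keyB K G a j₀ hj0a hj0u t s hs hF
  · rw [hmt_single_notMem K G a j₀ hj0a t s hs hF, map_zero, zero_add]
    exact keyA K G a j₀ hj0a hj0u (t + 1) s hs hF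

end Contractible

theorem a_invariant_bound
    (G : Finset (Fin n → ℕ))
    (hmin : ∀ u ∈ G, ∀ v ∈ G, (∀ j, u j ≤ v j) → u = v) (hne : ∀ u ∈ G, u ≠ 0)
    (i : ℕ) (a : Fin n → ℤ)
    (ha : (∑ j, a j) > (∑ j, (rho G j : ℤ)) - n) :
    lcRank K G a i = 0 := by
  obtain ⟨j₀, hj0⟩ : ∃ j₀, (rho G j₀ : ℤ) ≤ a j₀ := by
    by_contra h
    push_neg at h
    have hle : ∑ j, a j ≤ ∑ j : Fin n, ((rho G j : ℤ) - 1) :=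
      Finset.sum_le_sum fun j _ => by have := h j; omega
    rw [Finset.sum_sub_distrib] at hle
    simp only [Finset.sum_const, Finset.card_univ, Fintype.card_fin, nsmul_eq_mul,
      mul_one] at hle
    omega
  have hj0a : 0 ≤ a j₀ := le_trans (Int.ofNat_nonneg _) hj0
  have hj0u : ∀ u ∈ G, (u j₀ : ℤ) ≤ a j₀ := fun u hu =>
    le_trans (by exact_mod_cast Finset.le_sup (f := fun u => u j₀) hu) hj0
  cases i with
  | zero =>
    have hinj : Function.Injective (cechD K G a 0) := by
      intro x y hxy
      have hx := DFunLike.congr_fun (homotopy_id0 K G a j₀ hj0a hj0u) x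
      have hy := DFunLike.congr_fun (homotopy_id0 K G a j₀ hj0a hj0u) y
      simp only [LinearMap.coe_comp, Function.comp_apply, LinearMap.id_apply] at hx hy
      rw [← hx, ← hy, hxy]
    show Module.finrank K (LinearMap.ker (cechD K G a 0)) - 0 = 0
    rw [LinearMap.ker_eq_bot.2 hinj, finrank_bot]
  | succ m =>
    have hle : LinearMap.ker (cechD K G a (m + 1)) ≤ LinearMap.range (cechD K G a m) := by
      intro x hx
      have h1 := DFunLike.congr_fun (homotopy_id K G a j₀ hj0a hj0u m) x
      simp only [LinearMap.add_apply, LinearMap.coe_comp, Function.comp_apply,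
        LinearMap.id_apply] at h1
      rw [LinearMap.mem_ker.1 hx, map_zero, add_zero] at h1
      exact ⟨_, h1⟩
    show Module.finrank K (LinearMap.ker (cechD K G a (m + 1))) -
      Module.finrank K (LinearMap.range (cechD K G a m)) = 0
    exact Nat.sub_eq_zero_of_le (Submodule.finrank_mono hle)

end
end
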